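/- arXiv:2304.04710 — 3 statements merged into one kernel-verified Lean document; each statement's English description precedes it below -/
import Mathlib

section
/- Let g : ℝⁿ → ℝ be convex and differentiable with L-Lipschitz gradient ∇g, let h : ℝⁿ → ℝ be convex, and let ω : ℝⁿ → ℝ be differentiable with gradient ∇ω. Fix λ > 0, a previous iterate x₋ ∈ ℝⁿ, an error vector e ∈ ℝⁿ, a point y ∈ ℝⁿ, and a vector v that is a subgradient of h at y and satisfies the first-order optimality condition v + ∇g(x₋) + e + (1/λ)(∇ω(y) − ∇ω(x₋)) = 0. Then for all x, z ∈ ℝⁿ: g(x) + h(y) ≤ g(z) + h(z) + (L/2)‖x − x₋‖² + ⟨e, z − x⟩ + ⟨v, y − x⟩ − (1/λ)⟨∇ω(y) − ∇ω(x), x − z⟩ − (1/λ)⟨∇ω(x) − ∇ω(x₋), x − z⟩. -/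
open RealInnerProductSpace

lemma line_hasDerivAt {n : ℕ} (g : EuclideanSpace ℝ (Fin n) → ℝ)
    (g' : EuclideanSpace ℝ (Fin n) → EuclideanSpace ℝ (Fin n))
    (hg : ∀ p, HasGradientAt g (g' p) p) (a d : EuclideanSpace ℝ (Fin n)) (t : ℝ) :
    HasDerivAt (fun s : ℝ => g (a + s • d)) ⟪g' (a + t • d), d⟫ t := by
  have hγ : HasDerivAt (fun s : ℝ => a + s • d) d t := by
    simpa using ((hasDerivAt_id t).smul_const d).const_add a
  have := ((hg (a + t • d)).hasFDerivAt).comp_hasDerivAt t hγ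
  exact this

lemma grad_ineq {n : ℕ} (g : EuclideanSpace ℝ (Fin n) → ℝ)
    (g' : EuclideanSpace ℝ (Fin n) → EuclideanSpace ℝ (Fin n))
    (hconv : ConvexOn ℝ Set.univ g) (hg : ∀ p, HasGradientAt g (g' p) p)
    (a b : EuclideanSpace ℝ (Fin n)) :
    g a + ⟪g' a, b - a⟫ ≤ g b := by
  set φ : ℝ → ℝ := fun s => g (a + s • (b - a)) with hφ
  have hc : ConvexOn ℝ Set.univ φ := by
    have := hconv.comp_affineMap (AffineMap.lineMap a b : ℝ →ᵃ[ℝ] _)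
    have heq : φ = g ∘ (AffineMap.lineMap a b : ℝ →ᵃ[ℝ] _) := by
      funext s
      simp [φ, Function.comp, AffineMap.lineMap_apply, add_comm]
    rw [heq]
    simpa using this
  have hd : HasDerivAt φ ⟪g' a, b - a⟫ 0 := by
    have := line_hasDerivAt g g' hg a (b - a) 0
    simpa using this
  have h01 : (0:ℝ) < 1 := one_pos
  have := hc.deriv_le_slope (Set.mem_univ 0) (Set.mem_univ 1) h01 hd.differentiableAt
  rw [hd.deriv] at this
  have hs : slope φ 0 1 = g b - g a := by
    simp [slope, φ]
  rw [hs] at this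
  linarith

lemma descent {n : ℕ} (g : EuclideanSpace ℝ (Fin n) → ℝ)
    (g' : EuclideanSpace ℝ (Fin n) → EuclideanSpace ℝ (Fin n))
    (L : ℝ) (hg : ∀ p, HasGradientAt g (g' p) p)
    (hLip : ∀ a b, ‖g' a - g' b‖ ≤ L * ‖a - b‖)
    (a x : EuclideanSpace ℝ (Fin n)) :
    g x ≤ g a + ⟪g' a, x - a⟫ + L / 2 * ‖x - a‖ ^ 2 := by
  set d := x - a with hd
  set ψ : ℝ → ℝ := fun t => g (a + t • d) - t * ⟪g' a, d⟫ - L / 2 * t ^ 2 * ‖d‖ ^ 2 with hψ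
  have hder : ∀ t : ℝ, HasDerivAt ψ
      (⟪g' (a + t • d), d⟫ - ⟪g' a, d⟫ - L * t * ‖d‖ ^ 2) t := by
    intro t
    have h1 := line_hasDerivAt g g' hg a d t
    have h2 : HasDerivAt (fun t : ℝ => t * ⟪g' a, d⟫) ⟪g' a, d⟫ t := by
      simpa using (hasDerivAt_id t).mul_const ⟪g' a, d⟫
    have h3 : HasDerivAt (fun t : ℝ => L / 2 * t ^ 2 * ‖d‖ ^ 2) (L * t * ‖d‖ ^ 2) t := by
      have : HasDerivAt (fun t : ℝ => t ^ 2) (2 * t) t := by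
        simpa using hasDerivAt_pow 2 t
      have := (this.const_mul (L / 2)).mul_const (‖d‖ ^ 2)
      rw [show L * t * ‖d‖ ^ 2 = L / 2 * (2 * t) * ‖d‖ ^ 2 by ring]
      exact this
    exact (h1.sub h2).sub h3
  obtain ⟨c, hc, hceq⟩ := exists_hasDerivAt_eq_slope ψ _ one_pos
    (fun t _ => (hder t).continuousAt.continuousWithinAt)
    (fun t _ => hder t)
  have hc0 : 0 < c := hc.1
  have hbound : ⟪g' (a + c • d), d⟫ - ⟪g' a, d⟫ - L * c * ‖d‖ ^ 2 ≤ 0 := by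
    have h1 : ⟪g' (a + c • d) - g' a, d⟫ ≤ ‖g' (a + c • d) - g' a‖ * ‖d‖ :=
      real_inner_le_norm _ _
    have h2 : ‖g' (a + c • d) - g' a‖ ≤ L * ‖(a + c • d) - a‖ := hLip _ _
    have h3 : ‖(a + c • d) - a‖ = c * ‖d‖ := by
      simp [norm_smul, abs_of_pos hc0]
    rw [h3] at h2
    have h4 : ⟪g' (a + c • d) - g' a, d⟫ = ⟪g' (a + c • d), d⟫ - ⟪g' a, d⟫ :=
      inner_sub_left _ _ _
    nlinarith [norm_nonneg d, mul_le_mul_of_nonneg_right h2 (norm_nonneg d)]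
  rw [hceq] at hbound
  have hbound : ψ 1 - ψ 0 ≤ 0 := by simpa using hbound
  have hψ1 : ψ 1 = g x - ⟪g' a, d⟫ - L / 2 * ‖d‖ ^ 2 := by simp [hψ, hd]
  have hψ0 : ψ 0 = g a := by simp [hψ]
  rw [hψ1, hψ0] at hbound
  linarith

/-- One-step inequality for the inexact proximal mirror descent step,
unconstrained case (first-order optimality condition holds as an equation). -/
theorem prox_mirror_step_unconstrained {n : ℕ}
    (g h : EuclideanSpace ℝ (Fin n) → ℝ)
    (g' : EuclideanSpace ℝ (Fin n) → EuclideanSpace ℝ (Fin n))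
    (ω : EuclideanSpace ℝ (Fin n) → ℝ)
    (ω' : EuclideanSpace ℝ (Fin n) → EuclideanSpace ℝ (Fin n))
    (L lam : ℝ)
    (xm e y v : EuclideanSpace ℝ (Fin n))
    (hgconv : ConvexOn ℝ Set.univ g)
    (hggrad : ∀ p, HasGradientAt g (g' p) p)
    (hgLip : ∀ a b, ‖g' a - g' b‖ ≤ L * ‖a - b‖)
    (hhconv : ConvexOn ℝ Set.univ h)
    (hωgrad : ∀ p, HasGradientAt ω (ω' p) p)
    (hlam : 0 < lam)
    (hsub : ∀ w, h y + ⟪v, w - y⟫ ≤ h w)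
    (hopt : v + g' xm + e + (1 / lam) • (ω' y - ω' xm) = 0) :
    ∀ x z : EuclideanSpace ℝ (Fin n),
      g x + h y ≤ g z + h z + L / 2 * ‖x - xm‖ ^ 2 + ⟪e, z - x⟫ + ⟪v, y - x⟫
        - (1 / lam) * ⟪ω' y - ω' x, x - z⟫
        - (1 / lam) * ⟪ω' x - ω' xm, x - z⟫ := by
  intro x z
  have H1 : g x ≤ g xm + ⟪g' xm, x - xm⟫ + L / 2 * ‖x - xm‖ ^ 2 :=
    descent g g' L hggrad hgLip xm x
  have H2 : g xm + ⟪g' xm, z - xm⟫ ≤ g z := grad_ineq g g' hgconv hggrad xm z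
  have H3 : h y + ⟪v, z - y⟫ ≤ h z := hsub z
  have H4 : ⟪v + g' xm + e + (1 / lam) • (ω' y - ω' xm), x - z⟫ = (0:ℝ) := by
    rw [hopt]; exact inner_zero_left _
  have H5 : ⟪v, x - z⟫ + ⟪g' xm, x - z⟫ + ⟪e, x - z⟫
      + (1 / lam) * ⟪ω' y - ω' xm, x - z⟫ = 0 := by
    rw [← H4]
    simp only [inner_add_left, real_inner_smul_left]
  have E1 : ⟪g' xm, x - z⟫ = ⟪g' xm, x - xm⟫ - ⟪g' xm, z - xm⟫ := by
    rw [← inner_sub_right]; congr 1; abel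
  have E2 : ⟪e, z - x⟫ = -⟪e, x - z⟫ := by
    rw [← inner_neg_right]; congr 1; abel
  have E3 : ⟪v, y - x⟫ = -⟪v, x - z⟫ - ⟪v, z - y⟫ := by
    rw [show y - x = -(x - z) + -(z - y) by abel, inner_add_right, inner_neg_right,
      inner_neg_right]; ring
  have E4 : ⟪ω' y - ω' xm, x - z⟫ = ⟪ω' y - ω' x, x - z⟫ + ⟪ω' x - ω' xm, x - z⟫ := by
    rw [← inner_add_left]; congr 1; abel
  rw [E4] at H5
  linarith
end

section
/- Let ω : ℝⁿ → ℝ be differentiable, σ-strongly convex (σ > 0), and have G-Lipschitz gradient ∇ω. Then for all points a, b, c ∈ ℝⁿ: V_ω(a,c) − V_ω(b,c) ≤ (G − σ/2)‖b − a‖² + G‖b − c‖·‖b − a‖. -/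
open RealInnerProductSpace

/-- Bregman divergence associated to `ω` with gradient field `ω'`. -/
noncomputable def bregman {n : ℕ} (ω : EuclideanSpace ℝ (Fin n) → ℝ)
    (ω' : EuclideanSpace ℝ (Fin n) → EuclideanSpace ℝ (Fin n))
    (a b : EuclideanSpace ℝ (Fin n)) : ℝ :=
  ω a - ω b - ⟪ω' b, a - b⟫

/-- Gradient inequality for the shifted convex function. -/
lemma grad_ineq_aux {n : ℕ}
    (ω : EuclideanSpace ℝ (Fin n) → ℝ)
    (ω' : EuclideanSpace ℝ (Fin n) → EuclideanSpace ℝ (Fin n))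
    (σ : ℝ)
    (hωgrad : ∀ p, HasGradientAt ω (ω' p) p)
    (hωsc : ConvexOn ℝ Set.univ (fun p => ω p - σ / 2 * ‖p‖ ^ 2))
    (x y : EuclideanSpace ℝ (Fin n)) :
    (ω x - σ / 2 * ‖x‖ ^ 2) - (ω y - σ / 2 * ‖y‖ ^ 2) ≤
      ⟪ω' x, x - y⟫ - σ * ⟪x, x - y⟫ := by
  set l : ℝ → EuclideanSpace ℝ (Fin n) := fun t => y + t • (x - y) with hl
  set φ : ℝ → ℝ := fun t => ω (l t) - σ / 2 * ‖l t‖ ^ 2 with hφ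
  have hline : ∀ t : ℝ, HasDerivAt l (x - y) t := fun t => by
    simpa [l] using ((hasDerivAt_id t).smul_const (x - y)).const_add y
  have hφd : ∀ t : ℝ,
      HasDerivAt φ (⟪ω' (l t), x - y⟫ - σ / 2 * (2 * ⟪l t, x - y⟫)) t := by
    intro t
    have h1 : HasDerivAt (fun s => ω (l s)) ⟪ω' (l t), x - y⟫ t := by
      have hF := hasGradientAt_iff_hasFDerivAt.mp (hωgrad (l t))
      have hc := hF.comp_hasDerivAt t (hline t)
      simp [InnerProductSpace.toDual_apply_apply] at hc
      exact hc
    have h2 : HasDerivAt (fun s => ‖l s‖ ^ 2) (2 * ⟪l t, x - y⟫) t := by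
      have := (HasDerivAt.inner ℝ (hline t) (hline t) :
        HasDerivAt (fun s => ⟪l s, l s⟫) (⟪l t, x - y⟫ + ⟪x - y, l t⟫) t)
      have heq : (fun s => ⟪l s, l s⟫) = fun s => ‖l s‖ ^ 2 := by
        funext s; rw [real_inner_self_eq_norm_sq]
      rw [heq] at this
      have : HasDerivAt (fun s => ‖l s‖ ^ 2) (⟪l t, x - y⟫ + ⟪x - y, l t⟫) t := this
      convert this using 1
      rw [real_inner_comm (x - y) (l t)]; ring
    exact h1.sub (h2.const_mul (σ / 2))
  have hφc : ConvexOn ℝ Set.univ φ := by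
    have hA := hωsc.comp_affineMap (AffineMap.lineMap y x : ℝ →ᵃ[ℝ] (EuclideanSpace ℝ (Fin n)))
    simp only [Set.preimage_univ] at hA
    have heq : ((fun p => ω p - σ / 2 * ‖p‖ ^ 2) ∘ (AffineMap.lineMap y x : ℝ →ᵃ[ℝ] (EuclideanSpace ℝ (Fin n)))) = φ := by
      funext t
      simp only [Function.comp_apply, AffineMap.lineMap_apply, φ, l]
      congr 2 <;> rw [vsub_eq_sub, vadd_eq_add, add_comm]
    rwa [heq] at hA
  have hslope := hφc.slope_le_of_hasDerivAt (Set.mem_univ (0:ℝ)) (Set.mem_univ (1:ℝ))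
    one_pos (hφd 1)
  have h0 : l 0 = y := by simp [l]
  have h1 : l 1 = x := by simp [l]
  have hs : slope φ 0 1 = φ 1 - φ 0 := by simp [slope_def_field]
  rw [hs] at hslope
  have := hslope
  simp only [φ, h0, h1] at this
  linarith
/-- Shift estimate for the Bregman divergence of a strongly convex function
with Lipschitz gradient:
`V_ω(a,c) − V_ω(b,c) ≤ (G − σ/2)‖b − a‖² + G‖b − c‖·‖b − a‖`. -/
theorem bregman_shift_estimate {n : ℕ}
    (ω : EuclideanSpace ℝ (Fin n) → ℝ)
    (ω' : EuclideanSpace ℝ (Fin n) → EuclideanSpace ℝ (Fin n))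
    (σ G : ℝ) (hσ : 0 < σ)
    (hωgrad : ∀ p, HasGradientAt ω (ω' p) p)
    (hωsc : ConvexOn ℝ Set.univ (fun p => ω p - σ / 2 * ‖p‖ ^ 2))
    (hωLip : ∀ a b, ‖ω' a - ω' b‖ ≤ G * ‖a - b‖)
    (a b c : EuclideanSpace ℝ (Fin n)) :
    bregman ω ω' a c - bregman ω ω' b c ≤
      (G - σ / 2) * ‖b - a‖ ^ 2 + G * ‖b - c‖ * ‖b - a‖ := by
  have key : ω a - ω b ≤ ⟪ω' a, a - b⟫ - σ / 2 * ‖a - b‖ ^ 2 := by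
    have h := grad_ineq_aux ω ω' σ hωgrad hωsc a b
    have hn : ‖a - b‖ ^ 2 = ‖a‖ ^ 2 - 2 * ⟪a, b⟫ + ‖b‖ ^ 2 := by
      rw [norm_sub_sq_real]
    have hi : ⟪a, a - b⟫ = ‖a‖ ^ 2 - ⟪a, b⟫ := by
      rw [inner_sub_right, real_inner_self_eq_norm_sq]
    nlinarith [h]
  have hsplit : (⟪ω' a, a - b⟫) - ⟪ω' c, a - b⟫ =
      ⟪ω' a - ω' b, a - b⟫ + ⟪ω' b - ω' c, a - b⟫ := by
    rw [inner_sub_left, inner_sub_left]; ring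
  have hnab : ‖a - b‖ = ‖b - a‖ := norm_sub_rev a b
  have h1 : ⟪ω' a - ω' b, a - b⟫ ≤ G * ‖b - a‖ * ‖b - a‖ := by
    calc ⟪ω' a - ω' b, a - b⟫ ≤ ‖ω' a - ω' b‖ * ‖a - b‖ := real_inner_le_norm _ _
      _ ≤ (G * ‖a - b‖) * ‖a - b‖ :=
        mul_le_mul_of_nonneg_right (hωLip a b) (norm_nonneg _)
      _ = G * ‖b - a‖ * ‖b - a‖ := by rw [hnab]
  have h2 : ⟪ω' b - ω' c, a - b⟫ ≤ G * ‖b - c‖ * ‖b - a‖ := by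
    calc ⟪ω' b - ω' c, a - b⟫ ≤ ‖ω' b - ω' c‖ * ‖a - b‖ := real_inner_le_norm _ _
      _ ≤ (G * ‖b - c‖) * ‖a - b‖ :=
        mul_le_mul_of_nonneg_right (hωLip b c) (norm_nonneg _)
      _ = G * ‖b - c‖ * ‖b - a‖ := by rw [hnab]
  have hbreg : bregman ω ω' a c - bregman ω ω' b c = ω a - ω b - ⟪ω' c, a - b⟫ := by
    simp only [bregman]
    rw [show a - c = (a - b) + (b - c) by abel, inner_add_right]
    ring
  rw [hbreg]
  have hsq : ‖a - b‖ ^ 2 = ‖b - a‖ ^ 2 := by rw [hnab]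
  nlinarith [key, h1, h2]
end

section
/- Let (u_i)_{i≥0} be a sequence of non-negative reals, (S_i)_{i≥0} a non-decreasing sequence of reals with S₀ ≥ u₀², and (τ_i)_{i≥1} a sequence of non-negative reals. If for every i ≥ 1 we have u_i² ≤ S_i + ∑_{k=1}^i τ_k u_k, then for every i ≥ 1, u_i ≤ (1/2)∑_{k=1}^i τ_k + √(S_i + ((1/2)∑_{k=1}^i τ_k)²). -/
open Finset

lemma quad_bound (M T S : ℝ) (hM : M ^ 2 ≤ S + T * M) (hnn : 0 ≤ S + (T / 2) ^ 2) :
    M ≤ T / 2 + Real.sqrt (S + (T / 2) ^ 2) := by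
  have h : (M - T / 2) ^ 2 ≤ S + (T / 2) ^ 2 := by nlinarith
  have h2 := Real.sqrt_le_sqrt h
  rw [Real.sqrt_sq_eq_abs] at h2
  have := abs_nonneg (M - T / 2)
  have h3 : M - T / 2 ≤ |M - T / 2| := le_abs_self _
  linarith

/-- Recursive sequence bound (Lemma from Schmidt–Roux–Bach):
if `u_i² ≤ S_i + ∑_{k=1}^i τ_k u_k` for all `i ≥ 1`, with `S` non-decreasing,
`S₀ ≥ u₀²`, `u_i ≥ 0`, `τ_i ≥ 0`, then
`u_i ≤ (1/2)∑_{k=1}^i τ_k + √(S_i + ((1/2)∑_{k=1}^i τ_k)²)`. -/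
theorem recursive_sequence_bound (u S τ : ℕ → ℝ)
    (hu : ∀ i, 0 ≤ u i)
    (hS : ∀ i j, i ≤ j → S i ≤ S j)
    (hS0 : u 0 ^ 2 ≤ S 0)
    (hτ : ∀ i, 1 ≤ i → 0 ≤ τ i)
    (hrec : ∀ i, 1 ≤ i → u i ^ 2 ≤ S i + ∑ k ∈ Icc 1 i, τ k * u k) :
    ∀ i, 1 ≤ i →
      u i ≤ (1 / 2) * ∑ k ∈ Icc 1 i, τ k
        + Real.sqrt (S i + ((1 / 2) * ∑ k ∈ Icc 1 i, τ k) ^ 2) := by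
  intro i hi
  set T : ℝ := ∑ k ∈ Icc 1 i, τ k with hT
  have hTnn : 0 ≤ T := Finset.sum_nonneg fun k hk => hτ k (mem_Icc.mp hk).1
  have hSi : 0 ≤ S i := le_trans (le_trans (sq_nonneg _) hS0) (hS 0 i (Nat.zero_le i))
  -- the max of u over [0, i]
  have hne : (Icc 0 i).Nonempty := ⟨0, by simp⟩
  obtain ⟨m, hm, hMeq⟩ := Finset.exists_mem_eq_sup' hne u
  set M : ℝ := (Icc 0 i).sup' hne u with hMdef
  have hMle : ∀ k ∈ Icc 0 i, u k ≤ M := fun k hk => Finset.le_sup' u hk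
  have hMnn : 0 ≤ M := le_trans (hu m) (le_of_eq hMeq.symm)
  have hkey : M ^ 2 ≤ S i + T * M := by
    rcases Nat.eq_zero_or_pos m with hm0 | hm1
    · have : M ^ 2 ≤ S i := by
        rw [hMeq, hm0]
        exact le_trans hS0 (hS 0 i (Nat.zero_le i))
      nlinarith [mul_nonneg hTnn hMnn]
    · have hmi : m ≤ i := (mem_Icc.mp hm).2
      have h1 : M ^ 2 ≤ S m + ∑ k ∈ Icc 1 m, τ k * u k := by
        rw [hMeq]; exact hrec m hm1
      have h2 : ∑ k ∈ Icc 1 m, τ k * u k ≤ ∑ k ∈ Icc 1 i, τ k * u k := by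
        apply Finset.sum_le_sum_of_subset_of_nonneg
        · exact Finset.Icc_subset_Icc_right hmi
        · intro k hk _
          exact mul_nonneg (hτ k (mem_Icc.mp hk).1) (hu k)
      have h3 : ∑ k ∈ Icc 1 i, τ k * u k ≤ T * M := by
        rw [hT, Finset.sum_mul]
        apply Finset.sum_le_sum
        intro k hk
        have hk1 := mem_Icc.mp hk
        exact mul_le_mul_of_nonneg_left
          (hMle k (mem_Icc.mpr ⟨Nat.zero_le k, hk1.2⟩)) (hτ k hk1.1)
      have := hS m i hmi
      linarith
  have hnn : 0 ≤ S i + (T / 2) ^ 2 := by positivity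
  have hui : u i ≤ M := hMle i (mem_Icc.mpr ⟨Nat.zero_le i, le_refl i⟩)
  have := quad_bound M T (S i) hkey hnn
  have heq : (1 / 2) * T = T / 2 := by ring
  rw [heq]
  linarith
end
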